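/- For every n with k < n < 2k, writing r = (n − k − 1) mod 4: SG(n) = 1 if r ∈ {0,3}, and SG(n) = 0 if r ∈ {1,2}, where SG is the Sprague–Grundy function of the game i-Mark({2},{k}) with k ≡ 1 (mod 4), k > 1. (That is, the SG sequence of the interval Y = [a_0+1, b−1] is (1,0,0,1) repeated (b − a_0 − 1)/4 times.) -/
import Mathlib


/-- The minimum excludant of a finite set of naturals. -/
noncomputable def mex (s : Finset ℕ) : ℕ := sInf {x : ℕ | x ∉ s}

/-- Sprague–Grundy function of the game i-Mark({2},{k}):
from a pile of `n ≥ 2` tokens one may subtract `2`,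
or replace a positive pile size `n` divisible by `k` by `n / k`. -/
noncomputable def sg (k : ℕ) (hk : 2 ≤ k) (n : ℕ) : ℕ :=
  mex ((if h : 2 ≤ n then {sg k hk (n - 2)} else ∅) ∪
       (if h : 0 < n ∧ k ∣ n then {sg k hk (n / k)} else ∅))
termination_by n
decreasing_by
  · omega
  · exact Nat.div_lt_self h.1 hk

/-- The sequence `c_0 = 4k`, `c_m = k(c_{m−1} + 2)`. -/
def c (k : ℕ) : ℕ → ℕ
  | 0 => 4 * k
  | m + 1 => k * (c k m + 2)

/-- The sequence `a_0 = k`, `a_m = k(a_{m−1} + 2)`. -/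
def a (k : ℕ) : ℕ → ℕ
  | 0 => k
  | m + 1 => k * (a k m + 2)

lemma mex_eq_of (s : Finset ℕ) (n : ℕ) (h1 : n ∉ s) (h2 : ∀ m, m < n → m ∈ s) :
    mex s = n := by
  have hne : n ∈ {x : ℕ | x ∉ s} := h1
  unfold mex
  refine le_antisymm (Nat.sInf_le hne) ?_
  by_contra h
  push_neg at h
  exact (Nat.sInf_mem ⟨n, hne⟩) (h2 _ h)

lemma mex_empty : mex (∅ : Finset ℕ) = 0 :=
  mex_eq_of _ 0 (by simp) (by omega)

lemma mex_s0 : mex ({0} : Finset ℕ) = 1 :=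
  mex_eq_of _ 1 (by simp) (by intro m hm; interval_cases m; simp)

lemma mex_s1 : mex ({1} : Finset ℕ) = 0 :=
  mex_eq_of _ 0 (by simp) (by omega)

lemma mex_s2 : mex ({2} : Finset ℕ) = 0 :=
  mex_eq_of _ 0 (by simp) (by omega)

lemma mex_s10 : mex ({1, 0} : Finset ℕ) = 2 :=
  mex_eq_of _ 2 (by simp) (by intro m hm; interval_cases m <;> simp)

lemma sg_small (k : ℕ) (hk : 2 ≤ k) : ∀ n, n < k → sg k hk n = n / 2 % 2 := by
  intro n
  induction n using Nat.strong_induction_on with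
  | _ n ih =>
  intro hn
  rw [sg]
  have hnd : ¬ (0 < n ∧ k ∣ n) := by
    rintro ⟨hpos, hdvd⟩
    exact absurd (Nat.le_of_dvd hpos hdvd) (by omega)
  rw [dif_neg hnd, Finset.union_empty]
  by_cases h2 : 2 ≤ n
  · rw [dif_pos h2, ih (n - 2) (by omega) (by omega)]
    rcases Nat.mod_two_eq_zero_or_one ((n - 2) / 2) with h | h
    · rw [h, show n / 2 % 2 = 1 by omega]; exact mex_s0
    · rw [h, show n / 2 % 2 = 0 by omega]; exact mex_s1
  · rw [dif_neg h2, show n / 2 % 2 = 0 by omega]; exact mex_empty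

lemma sg_at_k (k : ℕ) (hk4 : k % 4 = 1) (hk5 : 5 ≤ k) (hk : 2 ≤ k) :
    sg k hk k = 2 := by
  rw [sg, dif_pos (by omega), dif_pos ⟨by omega, dvd_refl k⟩,
    Nat.div_self (by omega), sg_small k hk (k - 2) (by omega),
    sg_small k hk 1 (by omega), show (k - 2) / 2 % 2 = 1 by omega,
    show (1 : ℕ) / 2 % 2 = 0 by norm_num]
  exact mex_s10

lemma sg_Y' (k : ℕ) (hk4 : k % 4 = 1) (hk1 : 1 < k) (hk : 2 ≤ k) :
    ∀ n, k < n → n < 2 * k →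
      sg k hk n = if (n - k - 1) % 4 = 0 ∨ (n - k - 1) % 4 = 3 then 1 else 0 := by
  have hk5 : 5 ≤ k := by omega
  intro n
  induction n using Nat.strong_induction_on with
  | _ n ih =>
  intro h1 h2
  have hstep : sg k hk n = mex {sg k hk (n - 2)} := by
    rw [sg, dif_pos (by omega), dif_neg, Finset.union_empty]
    rintro ⟨hpos, m, rfl⟩
    rcases m with _ | _ | m
    · omega
    · omega
    · have : k * 2 ≤ k * (m + 1 + 1) := Nat.mul_le_mul_left k (by omega)
      omega
  by_cases hn1 : n = k + 1
  · subst hn1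
    rw [hstep, sg_small k hk (k + 1 - 2) (by omega),
      show (k + 1 - 2) / 2 % 2 = 0 by omega, if_pos (Or.inl (by omega))]
    exact mex_s0
  by_cases hn2 : n = k + 2
  · subst hn2
    rw [hstep, show k + 2 - 2 = k by omega, sg_at_k k hk4 hk5 hk,
      if_neg (by omega)]
    exact mex_s2
  · have ih' := ih (n - 2) (by omega) (by omega) (by omega)
    rw [hstep, ih']
    by_cases hc : (n - 2 - k - 1) % 4 = 0 ∨ (n - 2 - k - 1) % 4 = 3
    · rw [if_pos hc, if_neg (by omega)]; exact mex_s1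
    · rw [if_neg hc, if_pos (by omega)]; exact mex_s0

theorem sg_Y (k : ℕ) (hk : k % 4 = 1) (hk1 : 1 < k) (n : ℕ)
    (h1 : k < n) (h2 : n < 2 * k) (r : ℕ) (hr : r = (n - k - 1) % 4) :
    (r = 0 ∨ r = 3 → sg k (by omega) n = 1) ∧
    (r = 1 ∨ r = 2 → sg k (by omega) n = 0) := by
  have h := sg_Y' k hk hk1 (by omega) n h1 h2
  subst hr
  constructor
  · intro hcase
    rw [if_pos hcase] at h
    exact h
  · intro hcase
    rw [if_neg (by omega)] at h
    exact h
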